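/- Suppose f ∈ C²(ℝ^d) with ‖∇²f(x)‖ ≤ M for all x, 0 < α ≤ 1/M, f(0) = 0 and ∇f(0) = 0. Let σ > 0 and let x ∈ ℝ^d satisfy ‖∇f(x)‖ ≥ σ‖x‖. Then for every coordinate index i with |e_iᵀ ∇f(x)| ≥ (1/√d) ‖∇f(x)‖, it holds that f(x − α e_i ∂_i f(x)) ≤ (1 − ασ²/(Md)) f(x). -/

import Mathlib

open Filter Topology

noncomputable section

/-- The Hessian `∇²f(x)` of `f` at `x`, as a continuous linear map. -/
def hess (d : ℕ) (f : EuclideanSpace ℝ (Fin d) → ℝ) (x : EuclideanSpace ℝ (Fin d)) :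
    EuclideanSpace ℝ (Fin d) →L[ℝ] EuclideanSpace ℝ (Fin d) :=
  fderiv ℝ (gradient f) x

/-!
Bounding the Hessian by `M` makes `∇f` `M`-Lipschitz, which gives the descent lemma
`f (a + v) ≤ f a + ⟪∇f a, v⟫ + M/2 ‖v‖²`. At `a = x` along the chosen coordinate, with `αM ≤ 1`,
the step decreases `f` by at least `α/2 (∂ᵢf x)²`; at `a = 0`, where `f` and `∇f` vanish, it
gives `f x ≤ M/2 ‖x‖²`. The two conditions on `x` and `i` give
`σ²‖x‖² ≤ ‖∇f x‖² ≤ d (∂ᵢf x)²`, so the decrease is at least `ασ²/(Md) f x`.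
-/

open RealInnerProductSpace NNReal

section Descent

variable {E : Type*} [NormedAddCommGroup E] [InnerProductSpace ℝ E] [CompleteSpace E]
  {f : E → ℝ}

theorem lipschitzWith_gradient_of_norm_fderiv_le {M : ℝ} (hf : ContDiff ℝ 2 f)
    (hM : ∀ x, ‖fderiv ℝ (gradient f) x‖ ≤ M) : LipschitzWith M.toNNReal (gradient f) := by
  have hgrad : ContDiff ℝ 1 (gradient f) :=
    (InnerProductSpace.toDual ℝ E).symm.contDiff.comp (hf.fderiv_right (by norm_num))
  refine lipschitzWith_of_nnnorm_fderiv_le (hgrad.differentiable one_ne_zero) fun x => ?_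
  rw [← NNReal.coe_le_coe, coe_nnnorm]
  exact (hM x).trans (Real.le_coe_toNNReal M)

theorem hasDerivAt_comp_add_smul (hf : Differentiable ℝ f) (a v : E) (t : ℝ) :
    HasDerivAt (fun t : ℝ => f (a + t • v)) ⟪gradient f (a + t • v), v⟫ t := by
  have hline : HasDerivAt (fun t : ℝ => a + t • v) v t := by
    simpa using ((hasDerivAt_id t).smul_const v).const_add a
  have h := (hf (a + t • v)).hasGradientAt.hasFDerivAt.comp_hasDerivAt t hline
  rw [InnerProductSpace.toDual_apply_apply] at h
  exact h

theorem le_add_inner_gradient_add_sq (hf : Differentiable ℝ f) {L : ℝ≥0}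
    (hL : LipschitzWith L (gradient f)) (a v : E) :
    f (a + v) ≤ f a + ⟪gradient f a, v⟫ + L / 2 * ‖v‖ ^ 2 := by
  set ψ : ℝ → ℝ := fun t => f (a + t • v) - t * ⟪gradient f a, v⟫ - L / 2 * ‖v‖ ^ 2 * t ^ 2
    with hψ
  have hψ' : ∀ t, HasDerivAt ψ
      (⟪gradient f (a + t • v) - gradient f a, v⟫ - L * ‖v‖ ^ 2 * t) t := fun t => by
    refine (((hasDerivAt_comp_add_smul hf a v t).sub
      (hasDerivAt_mul_const ⟪gradient f a, v⟫)).sub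
      ((hasDerivAt_pow 2 t).const_mul (L / 2 * ‖v‖ ^ 2))).congr_deriv ?_
    rw [inner_sub_left]
    ring
  have hψ'_nonpos : ∀ t ∈ interior (Set.Icc (0 : ℝ) 1), deriv ψ t ≤ 0 := by
    intro t ht
    rw [interior_Icc] at ht
    rw [(hψ' t).deriv, sub_nonpos]
    calc ⟪gradient f (a + t • v) - gradient f a, v⟫
        ≤ ‖gradient f (a + t • v) - gradient f a‖ * ‖v‖ := real_inner_le_norm _ _
      _ ≤ L * ‖a + t • v - a‖ * ‖v‖ := by
          gcongr
          simpa only [dist_eq_norm] using hL.dist_le_mul (a + t • v) a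
      _ = L * ‖v‖ ^ 2 * t := by
          rw [add_sub_cancel_left, norm_smul, Real.norm_of_nonneg ht.1.le]
          ring
  have hψ_diff : Differentiable ℝ ψ := fun t => (hψ' t).differentiableAt
  have hanti : ψ 1 ≤ ψ 0 :=
    antitoneOn_of_deriv_nonpos (convex_Icc 0 1) hψ_diff.continuous.continuousOn
      hψ_diff.differentiableOn hψ'_nonpos (by norm_num) (by norm_num) zero_le_one
  simp only [hψ, one_smul, zero_smul, add_zero, one_mul, one_pow, zero_mul, sub_zero,
    mul_zero, ne_eq, OfNat.ofNat_ne_zero, not_false_eq_true, zero_pow] at hanti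
  linarith

theorem le_half_mul_norm_sq_of_gradient_eq_zero (hf : Differentiable ℝ f) {L : ℝ≥0}
    (hL : LipschitzWith L (gradient f)) (hf0 : f 0 = 0) (hcrit : gradient f 0 = 0) (x : E) :
    f x ≤ L / 2 * ‖x‖ ^ 2 := by
  simpa [hf0, hcrit] using le_add_inner_gradient_add_sq hf hL 0 x

end Descent

theorem coordinate_step_le {ι : Type*} [Fintype ι] [DecidableEq ι] {f : EuclideanSpace ℝ ι → ℝ}
    (hf : Differentiable ℝ f) {L : ℝ≥0} (hL : LipschitzWith L (gradient f)) {α : ℝ}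
    (hα : 0 ≤ α) (hαL : α * L ≤ 1) (x : EuclideanSpace ℝ ι) (i : ι) :
    f (x - (α * gradient f x i) • EuclideanSpace.single i (1 : ℝ)) ≤
      f x - α / 2 * gradient f x i ^ 2 := by
  set g := gradient f x i
  have hinner : ⟪gradient f x, -(α * g) • EuclideanSpace.single i (1 : ℝ)⟫ = -(α * g ^ 2) := by
    rw [real_inner_smul_right, EuclideanSpace.inner_single_right]
    simp only [conj_trivial, one_mul]
    ring
  have hnorm : ‖-(α * g) • EuclideanSpace.single i (1 : ℝ)‖ ^ 2 = α ^ 2 * g ^ 2 := by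
    rw [norm_smul, PiLp.norm_single, norm_one, mul_one, Real.norm_eq_abs, sq_abs]
    ring
  have hdescent := le_add_inner_gradient_add_sq hf hL x (-(α * g) • EuclideanSpace.single i 1)
  rw [hinner, hnorm, ← sub_eq_add_neg, neg_smul, ← sub_eq_add_neg] at hdescent
  have hquad : L / 2 * (α ^ 2 * g ^ 2) ≤ α / 2 * g ^ 2 := by
    calc L / 2 * (α ^ 2 * g ^ 2) = α * L * (α / 2 * g ^ 2) := by ring
      _ ≤ 1 * (α / 2 * g ^ 2) := by gcongr
      _ = α / 2 * g ^ 2 := one_mul _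
  linarith

theorem sq_le_mul_sq_of_inv_sqrt_mul_le {n r s : ℝ} (hn : 0 < n) (hr : 0 ≤ r)
    (h : 1 / Real.sqrt n * r ≤ |s|) : r ^ 2 ≤ n * s ^ 2 := by
  have hsq := pow_le_pow_left₀ (by positivity) h 2
  rw [mul_pow, div_pow, one_pow, Real.sq_sqrt hn.le, sq_abs, one_div_mul_eq_div,
    div_le_iff₀ hn] at hsq
  linarith

theorem rcgd_step_linear_decrease_general
    {d : ℕ} (f : EuclideanSpace ℝ (Fin d) → ℝ) (M α : ℝ)
    (hf : ContDiff ℝ 2 f)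
    (hM : ∀ x, ‖hess d f x‖ ≤ M)
    (hα : 0 < α) (hα' : α ≤ 1 / M)
    (hf0 : f 0 = 0) (hcrit : gradient f 0 = 0)
    (σ : ℝ) (hσ : 0 < σ)
    (x : EuclideanSpace ℝ (Fin d)) (hx : σ * ‖x‖ ≤ ‖gradient f x‖)
    (i : Fin d) (hi : (1 / Real.sqrt d) * ‖gradient f x‖ ≤ |gradient f x i|) :
    f (x - (α * gradient f x i) • EuclideanSpace.single i (1 : ℝ)) ≤
      (1 - α * σ ^ 2 / (M * d)) * f x := by
  have hMpos : 0 < M := by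
    by_contra! h
    linarith [one_div_nonpos.mpr h]
  have hd : (0 : ℝ) < d := by exact_mod_cast i.pos
  have hdiff : Differentiable ℝ f := hf.differentiable (by norm_num)
  have hL := lipschitzWith_gradient_of_norm_fderiv_le hf hM
  have hLM : (M.toNNReal : ℝ) = M := Real.coe_toNNReal M hMpos.le
  have hαM : α * M.toNNReal ≤ 1 := by rw [hLM]; exact (le_div_iff₀ hMpos).mp hα'
  have hstep := coordinate_step_le hdiff hL hα.le hαM x i
  have hval := le_half_mul_norm_sq_of_gradient_eq_zero hdiff hL hf0 hcrit x
  rw [hLM] at hval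
  have hσx : σ ^ 2 * ‖x‖ ^ 2 ≤ d * gradient f x i ^ 2 := by
    rw [← mul_pow]
    exact (pow_le_pow_left₀ (by positivity) hx 2).trans
      (sq_le_mul_sq_of_inv_sqrt_mul_le hd (norm_nonneg _) hi)
  have hdecrease : α * σ ^ 2 / (M * d) * f x ≤ α / 2 * gradient f x i ^ 2 :=
    calc α * σ ^ 2 / (M * d) * f x ≤ α * σ ^ 2 / (M * d) * (M / 2 * ‖x‖ ^ 2) := by gcongr
      _ = α / (2 * d) * (σ ^ 2 * ‖x‖ ^ 2) := by field_simp
      _ ≤ α / (2 * d) * (d * gradient f x i ^ 2) := by gcongr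
      _ = α / 2 * gradient f x i ^ 2 := by field_simp
  linarith

/-- Linear decrease of function values on a good step: if `‖∇f(x)‖ ≥ σ‖x‖` and the chosen
coordinate satisfies `|e_iᵀ∇f(x)| ≥ (1/√d)‖∇f(x)‖`, then
`f(x − α e_i ∂_i f(x)) ≤ (1 − ασ²/(Md)) f(x)`. -/
theorem rcgd_step_linear_decrease
    {d : ℕ} (hd : 1 ≤ d) (f : EuclideanSpace ℝ (Fin d) → ℝ) (M α : ℝ)
    (hf : ContDiff ℝ 2 f)
    (hM : ∀ x, ‖hess d f x‖ ≤ M)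
    (hα : 0 < α) (hα' : α ≤ 1 / M)
    (hf0 : f 0 = 0) (hcrit : gradient f 0 = 0)
    (σ : ℝ) (hσ : 0 < σ)
    (x : EuclideanSpace ℝ (Fin d)) (hx : σ * ‖x‖ ≤ ‖gradient f x‖)
    (i : Fin d) (hi : (1 / Real.sqrt d) * ‖gradient f x‖ ≤ |gradient f x i|) :
    f (x - (α * gradient f x i) • EuclideanSpace.single i (1 : ℝ)) ≤
      (1 - α * σ ^ 2 / (M * d)) * f x :=
  rcgd_step_linear_decrease_general f M α hf hM hα hα' hf0 hcrit σ hσ x hx i hi
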